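/- Let T = 2^d with d ≥ 1 and let t, t' ∈ {0,…,T−1} with t < t'. For every index j' ∈ {1,…,d+1} with sibling(j',t') ≠ ⊥, there exists exactly one index j ∈ {1,…,d+1} such that sibling(j,t) ≠ ⊥ and sibling(j,t) is a prefix of sibling(j',t'). (That is, every non-⊥ node of Nodes_{(t'→T−1)} has a unique ancestor, possibly itself, in Nodes_{(t→T−1)}.) -/

import Mathlib

/-- `bin d t` is the big-endian binary representation of `t` of length `d`:
its `j`-th entry (`1 ≤ j ≤ d`, i.e. index `j-1`) is the bit `t / 2^(d-j) % 2`. -/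
def bin (d t : ℕ) : List Bool :=
  (List.range d).map (fun i => decide (t / 2 ^ (d - 1 - i) % 2 = 1))

/-- `sibling d j t` for `j ∈ {1,…,d+1}`: for `j ≤ d` it is
`(Bin(t)[1],…,Bin(t)[j-1],1)` when `Bin(t)[j] = 0` and `⊥` (`none`) when `Bin(t)[j] = 1`;
and `sibling d (d+1) t = Bin(t)`. -/
def sibling (d j t : ℕ) : Option (List Bool) :=
  if j = d + 1 then some (bin d t)
  else if t / 2 ^ (d - j) % 2 = 0 then some ((bin d t).take (j - 1) ++ [true])
  else none


@[simp] lemma bin_length (d t : ℕ) : (bin d t).length = d := by simp [bin]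

lemma bin_eq (d t : ℕ) : bin d t = (List.range d).map fun i => t.testBit (d - 1 - i) := by
  simp [bin, Nat.testBit_eq_decide_div_mod_eq]

lemma bin_inj {d s t : ℕ} (hs : s < 2 ^ d) (ht : t < 2 ^ d) (h : bin d s = bin d t) : s = t := by
  apply Nat.eq_of_testBit_eq
  intro i
  by_cases hi : i < d
  · rw [bin_eq, bin_eq] at h
    have h2 := congrArg (fun l => l[d - 1 - i]?) h
    simp only [List.getElem?_map, List.getElem?_range (by omega : d - 1 - i < d)] at h2
    simp only [Option.map_some] at h2
    have h3 : d - 1 - (d - 1 - i) = i := by omega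
    rw [h3] at h2
    exact Option.some.inj h2
  · rw [Nat.testBit_lt_two_pow (lt_of_lt_of_le hs (Nat.pow_le_pow_right (by norm_num) (by omega))),
      Nat.testBit_lt_two_pow (lt_of_lt_of_le ht (Nat.pow_le_pow_right (by norm_num) (by omega)))]

lemma bin_take {d k s : ℕ} (hk : k ≤ d) : (bin d s).take k = bin k (s / 2 ^ (d - k)) := by
  unfold bin
  rw [← List.map_take, List.take_range, Nat.min_eq_left hk]
  apply List.map_congr_left
  intro i hi
  rw [List.mem_range] at hi
  rw [Nat.div_div_eq_div_mul, ← pow_add]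
  have h1 : d - k + (k - 1 - i) = d - 1 - i := by omega
  rw [h1]

lemma bin_succ (j a : ℕ) : bin (j + 1) (2 * a + 1) = bin j a ++ [true] := by
  unfold bin
  rw [List.range_succ, List.map_append]
  congr 1
  · apply List.map_congr_left
    intro i hi
    rw [List.mem_range] at hi
    have h1 : j + 1 - 1 - i = (j - 1 - i) + 1 := by omega
    rw [h1, pow_succ', ← Nat.div_div_eq_div_mul]
    have h2 : (2 * a + 1) / 2 = a := by omega
    rw [h2]
  · simp

lemma sibling_eq {d j t : ℕ} (hj1 : 1 ≤ j) (hjd : j ≤ d) (h0 : t / 2 ^ (d - j) % 2 = 0) :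
    sibling d j t = some (bin j (t / 2 ^ (d - j) + 1)) := by
  unfold sibling
  rw [if_neg (by omega), if_pos h0]
  congr 1
  rw [bin_take (by omega : j - 1 ≤ d)]
  have ha : t / 2 ^ (d - (j - 1)) = t / 2 ^ (d - j) / 2 := by
    rw [Nat.div_div_eq_div_mul, ← pow_succ]
    congr 2
    omega
  have hb : t / 2 ^ (d - j) + 1 = 2 * (t / 2 ^ (d - j) / 2) + 1 := by omega
  rw [ha, hb]
  have hc : j = (j - 1) + 1 := by omega
  rw [hc, bin_succ]
  simp

lemma prefix_char {d j t s : ℕ} (hj1 : 1 ≤ j) (hjd : j ≤ d) (ht : t < 2 ^ d) (hs : s < 2 ^ d) :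
    (∃ z, sibling d j t = some z ∧ z <+: bin d s) ↔
      (t / 2 ^ (d - j) % 2 = 0 ∧ s / 2 ^ (d - j) = t / 2 ^ (d - j) + 1) := by
  have hdivs : s / 2 ^ (d - j) < 2 ^ j := by
    rw [Nat.div_lt_iff_lt_mul (Nat.pow_pos (by norm_num : 0 < 2)), ← pow_add]
    calc s < 2 ^ d := hs
    _ ≤ 2 ^ (j + (d - j)) := by apply Nat.pow_le_pow_right <;> omega
  have hdivt : t / 2 ^ (d - j) < 2 ^ j := by
    rw [Nat.div_lt_iff_lt_mul (Nat.pow_pos (by norm_num : 0 < 2)), ← pow_add]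
    calc t < 2 ^ d := ht
    _ ≤ 2 ^ (j + (d - j)) := by apply Nat.pow_le_pow_right <;> omega
  constructor
  · rintro ⟨z, hz, hpre⟩
    have h0 : t / 2 ^ (d - j) % 2 = 0 := by
      by_contra h0
      rw [sibling, if_neg (by omega), if_neg h0] at hz
      exact nomatch hz
    refine ⟨h0, ?_⟩
    rw [sibling_eq hj1 hjd h0] at hz
    have hz' : z = bin j (t / 2 ^ (d - j) + 1) := (Option.some.inj hz).symm
    have hlen : z.length = j := by rw [hz', bin_length]
    have : z = (bin d s).take j := by
      rw [← hlen]; exact List.prefix_iff_eq_take.mp hpre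
    rw [bin_take hjd] at this
    have heq : bin j (s / 2 ^ (d - j)) = bin j (t / 2 ^ (d - j) + 1) := by
      rw [← this, hz']
    have hlt : t / 2 ^ (d - j) + 1 < 2 ^ j := by
      have h2 : (2:ℕ) ^ j % 2 = 0 := by
        have : j = (j - 1) + 1 := by omega
        rw [this, pow_succ]; omega
      omega
    exact bin_inj hdivs hlt heq
  · rintro ⟨h0, hdiv⟩
    refine ⟨bin j (t / 2 ^ (d - j) + 1), sibling_eq hj1 hjd h0, ?_⟩
    rw [← hdiv, ← bin_take hjd]
    exact List.take_prefix _ _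

lemma prefix_char' {d t s : ℕ} (ht : t < 2 ^ d) (hs : s < 2 ^ d) :
    (∃ z, sibling d (d + 1) t = some z ∧ z <+: bin d s) ↔ s = t := by
  constructor
  · rintro ⟨z, hz, hpre⟩
    rw [sibling, if_pos rfl] at hz
    have hz' : z = bin d t := (Option.some.inj hz).symm
    subst hz'
    have : bin d t = bin d s := hpre.eq_of_length (by simp)
    exact bin_inj hs ht this.symm
  · rintro rfl
    exact ⟨bin d s, by rw [sibling, if_pos rfl], List.prefix_refl _⟩

lemma exists_e : ∀ d t s : ℕ, t < s → s < 2 ^ d →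
    ∃ e, e < d ∧ t / 2 ^ e % 2 = 0 ∧ s / 2 ^ e = t / 2 ^ e + 1 := by
  intro d
  induction d with
  | zero => intro t s h1 h2; simp at h2; omega
  | succ d ih =>
    intro t s h1 h2
    by_cases h : t / 2 = s / 2
    · exact ⟨0, by omega, by simpa using by omega, by simpa using by omega⟩
    · have h1' : t / 2 < s / 2 := by omega
      have h2' : s / 2 < 2 ^ d := by
        have : (2:ℕ) ^ (d + 1) = 2 ^ d * 2 := pow_succ 2 d
        omega
      obtain ⟨e, he, h0, hs⟩ := ih _ _ h1' h2'
      have key : ∀ n : ℕ, n / 2 ^ (e + 1) = n / 2 / 2 ^ e := by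
        intro n
        rw [Nat.div_div_eq_div_mul, ← pow_succ']
      exact ⟨e + 1, by omega, by rw [key]; exact h0, by rw [key, key]; exact hs⟩

lemma uniq_e {t s e1 e2 : ℕ} (h12 : e1 < e2) (c10 : t / 2 ^ e1 % 2 = 0)
    (c11 : s / 2 ^ e1 = t / 2 ^ e1 + 1) (c2 : s / 2 ^ e2 = t / 2 ^ e2 + 1) : False := by
  set k := e2 - e1 with hk
  have hks : ∀ n : ℕ, n / 2 ^ e2 = n / 2 ^ e1 / 2 ^ k := by
    intro n
    rw [Nat.div_div_eq_div_mul, ← pow_add]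
    congr 2
    omega
  set n := t / 2 ^ e1 with hn
  rw [hks, hks, c11, ← hn] at c2
  -- c2 : (n + 1) / 2 ^ k = n / 2 ^ k + 1, with n even, k ≥ 1 : contradiction
  have hmod : n % 2 ^ k % 2 = 0 := by
    rw [Nat.mod_mod_of_dvd _ (dvd_pow_self 2 (by omega : k ≠ 0))]
    exact c10
  have hlt : n % 2 ^ k < 2 ^ k := Nat.mod_lt _ (Nat.pow_pos (by norm_num : 0 < 2))
  have hpk : (2:ℕ) ^ k % 2 = 0 := by
    have : k = (k - 1) + 1 := by omega
    rw [this, pow_succ]; omega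
  have hsucc : n % 2 ^ k + 1 < 2 ^ k := by omega
  have hdecomp : n + 1 = 2 ^ k * (n / 2 ^ k) + (n % 2 ^ k + 1) := by
    have := Nat.div_add_mod n (2 ^ k); omega
  rw [hdecomp, Nat.mul_add_div (Nat.pow_pos (by norm_num : 0 < 2)),
    Nat.div_eq_of_lt hsucc] at c2
  omega

lemma leaf_unique (d t s : ℕ) (ht : t < 2 ^ d) (hts : t < s) (hs : s < 2 ^ d) :
    ∃! j : ℕ, j ∈ Finset.Icc 1 (d + 1) ∧
      ∃ z : List Bool, sibling d j t = some z ∧ z <+: bin d s := by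
  obtain ⟨e, he, h0, hse⟩ := exists_e d t s hts hs
  refine ⟨d - e, ⟨Finset.mem_Icc.mpr (by omega), ?_⟩, ?_⟩
  · rw [prefix_char (by omega) (by omega) ht hs]
    have : d - (d - e) = e := by omega
    rw [this]
    exact ⟨h0, hse⟩
  · rintro j1 ⟨hj1, hex⟩
    rw [Finset.mem_Icc] at hj1
    by_cases hje : j1 = d + 1
    · subst hje
      rw [prefix_char' ht hs] at hex
      omega
    · have hj1d : j1 ≤ d := by omega
      rw [prefix_char (by omega) hj1d ht hs] at hex
      obtain ⟨h0', hse'⟩ := hex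
      by_contra hne
      have hene : d - j1 ≠ e := by omega
      rcases Nat.lt_or_ge (d - j1) e with h | h
      · exact uniq_e h h0' hse' hse
      · exact uniq_e (by omega) h0 hse hse'

lemma div_pow_lt {d j t : ℕ} (ht : t < 2 ^ d) (hj : j ≤ d) : t / 2 ^ (d - j) < 2 ^ j := by
  rw [Nat.div_lt_iff_lt_mul (Nat.pow_pos (by norm_num : 0 < 2)), ← pow_add]
  calc t < 2 ^ d := ht
  _ ≤ 2 ^ (j + (d - j)) := by apply Nat.pow_le_pow_right <;> omega

lemma pow_two_mod_two {k : ℕ} (hk : 1 ≤ k) : (2:ℕ) ^ k % 2 = 0 := by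
  have : k = (k - 1) + 1 := by omega
  rw [this, pow_succ]
  omega

/-- For `t < t'`, every non-`⊥` node of `Nodes_{(t'→T-1)}` has a unique ancestor (possibly
itself) among the non-`⊥` nodes of `Nodes_{(t→T-1)}`. -/
theorem stmt13 (d t t' : ℕ) (hd : 1 ≤ d) (ht : t < 2 ^ d) (ht' : t' < 2 ^ d) (htt : t < t') :
    ∀ j' ∈ Finset.Icc 1 (d + 1), ∀ z' : List Bool, sibling d j' t' = some z' →
      ∃! j : ℕ, j ∈ Finset.Icc 1 (d + 1) ∧
        ∃ z : List Bool, sibling d j t = some z ∧ z <+: z' := by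
  intro j' hj' z' hz'
  rw [Finset.mem_Icc] at hj'
  obtain ⟨s', hts', hs'lt, hpre', hzlen, hbound⟩ :
      ∃ s', t < s' ∧ s' < 2 ^ d ∧ z' <+: bin d s' ∧ min j' d ≤ z'.length ∧
        (∀ j, j ≤ d → j' < j → s' / 2 ^ (d - j) % 2 = 0) := by
    by_cases hje : j' = d + 1
    · subst hje
      rw [sibling, if_pos rfl] at hz'
      obtain rfl := Option.some.inj hz'
      exact ⟨t', htt, ht', List.prefix_refl _, by simp, fun j hjd hgt => by omega⟩
    · have hj'd : j' ≤ d := by omega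
      have hEpos : 0 < 2 ^ (d - j') := Nat.pow_pos (by norm_num : 0 < 2)
      have h0' : t' / 2 ^ (d - j') % 2 = 0 := by
        by_contra h0
        rw [sibling, if_neg (by omega), if_neg h0] at hz'
        exact nomatch hz'
      rw [sibling_eq (by omega) hj'd h0'] at hz'
      obtain rfl := Option.some.inj hz'
      refine ⟨(t' / 2 ^ (d - j') + 1) * 2 ^ (d - j'), ?_, ?_, ?_, ?_, ?_⟩
      · calc t < t' := htt
        _ < (t' / 2 ^ (d - j') + 1) * 2 ^ (d - j') :=
          (Nat.div_lt_iff_lt_mul hEpos).mp (Nat.lt_succ_self _)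
      · have hqlt : t' / 2 ^ (d - j') < 2 ^ j' := div_pow_lt ht' hj'd
        have hq1 : t' / 2 ^ (d - j') + 1 < 2 ^ j' := by
          have := pow_two_mod_two (show 1 ≤ j' by omega)
          omega
        calc (t' / 2 ^ (d - j') + 1) * 2 ^ (d - j') < 2 ^ j' * 2 ^ (d - j') :=
            (Nat.mul_lt_mul_right hEpos).mpr hq1
        _ = 2 ^ d := by rw [← pow_add]; congr 1; omega
      · have hdiv : (t' / 2 ^ (d - j') + 1) * 2 ^ (d - j') / 2 ^ (d - j') =
            t' / 2 ^ (d - j') + 1 := Nat.mul_div_cancel _ hEpos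
        have heq : bin j' (t' / 2 ^ (d - j') + 1) =
            (bin d ((t' / 2 ^ (d - j') + 1) * 2 ^ (d - j'))).take j' := by
          rw [bin_take hj'd, hdiv]
        rw [heq]
        exact List.take_prefix _ _
      · simp [hj'd]
      · intro j hjd hgt
        have hsplit : (2:ℕ) ^ (d - j') = 2 ^ (j - j') * 2 ^ (d - j) := by
          rw [← pow_add]; congr 1; omega
        have : (t' / 2 ^ (d - j') + 1) * 2 ^ (d - j') =
            ((t' / 2 ^ (d - j') + 1) * 2 ^ (j - j')) * 2 ^ (d - j) := by
          rw [hsplit, mul_assoc]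
        rw [this, Nat.mul_div_cancel _ (Nat.pow_pos (by norm_num : 0 < 2)), Nat.mul_mod,
          pow_two_mod_two (show 1 ≤ j - j' by omega)]
        simp
  obtain ⟨j, ⟨hjm, z, hsib, hzpre⟩, huniq⟩ := leaf_unique d t s' ht hts' hs'lt
  have hjm' := Finset.mem_Icc.mp hjm
  have hjd : j ≤ d := by
    by_contra h
    have hje : j = d + 1 := by omega
    subst hje
    have := (prefix_char' ht hs'lt).mp ⟨z, hsib, hzpre⟩
    omega
  obtain ⟨h0c, hsc⟩ := (prefix_char (by omega) hjd ht hs'lt).mp ⟨z, hsib, hzpre⟩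
  have hjj' : j ≤ j' := by
    by_contra h
    have := hbound j hjd (by omega)
    omega
  have hzlen' : z.length = j := by
    rw [sibling_eq (by omega) hjd h0c] at hsib
    rw [← Option.some.inj hsib, bin_length]
  refine ⟨j, ⟨hjm, z, hsib, ?_⟩, ?_⟩
  · exact List.prefix_of_prefix_length_le hzpre hpre' (by omega)
  · rintro j1 ⟨hj1m, z1, hs1, hp1⟩
    exact huniq j1 ⟨hj1m, z1, hs1, hp1.trans hpre'⟩
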